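/- Let 𝒜 = (ℤ; s) be the structure on the integers in the language with one unary function symbol interpreted as the successor function s(z) = z + 1, and let ℬ = (ℤ; s, p) be the structure on the integers in the language with two unary function symbols interpreted as successor and predecessor p(z) = z − 1. Then: (i) the pair of identity maps (id, id) is a semi-retraction between 𝒜 and ℬ; and (ii) 𝒜 does not have the Ramsey property: letting A = B be the substructure of 𝒜 generated by {0} (whose underlying set is the set of nonnegative integers), there is a 2-coloring c of the set of substructures of 𝒜 isomorphic to A (namely, coloring the copy with least element a by the parity of a) such that no substructure B' of 𝒜 isomorphic to B has c constant on the copies of A contained in B'. Hence (A, B) is not a Ramsey duo for 𝒜, showing that local finiteness of 𝒜 cannot be dropped from the semi-retraction transfer theorems. -/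

import Mathlib

/-!
In `(ℤ; s)` the atomic formulas `s^k(vᵢ) = s^m(vⱼ)` record all pairwise differences, so two
tuples with the same quantifier-free type differ by a translation. Translations are
automorphisms of `(ℤ; s, p)`, so they preserve its quantifier-free types; in the other direction
`(ℤ; s)` is a reduct of `(ℤ; s, p)`.

Substructures of `(ℤ; s)` are closed upwards, so `⟨0⟩ = [0, ∞)` and every copy `B'` of it
contains, for any `b ∈ B'`, both copies `[b, ∞)` and `[b + 1, ∞)` of `A`. Colouring a copy by the
parity of its least element, these two get different colours.
-/

open FirstOrder FirstOrder.Language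

/-- Two same-length tuples have the same quantifier-free type over ∅. -/
def SameQfType (L : FirstOrder.Language) (M : Type*) [L.Structure M] {n : ℕ}
    (x y : Fin n → M) : Prop :=
  ∀ φ : L.Formula (Fin n), φ.IsQF → (φ.Realize x ↔ φ.Realize y)

/-- A qftp-respecting injection between structures in possibly different languages. -/
def QftpRespecting (L L' : FirstOrder.Language) (M N : Type*) [L.Structure M] [L'.Structure N]
    (h : M → N) : Prop :=
  Function.Injective h ∧
    ∀ (n : ℕ) (x y : Fin n → M), SameQfType L M x y → SameQfType L' N (h ∘ x) (h ∘ y)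

/-- `(g, f)` is a semi-retraction between `M` and `N`: both maps are qftp-respecting
injections and `f ∘ g` is qftp-preserving (equivalently, an `L`-embedding of `M` into `M`). -/
def IsSemiRetraction (L L' : FirstOrder.Language) (M N : Type*)
    [L.Structure M] [L'.Structure N] (g : M → N) (f : N → M) : Prop :=
  QftpRespecting L L' M N g ∧ QftpRespecting L' L N M f ∧
    ∀ (n : ℕ) (x : Fin n → M), SameQfType L M x (f ∘ g ∘ x)

/-- `M` is locally finite: every finitely generated substructure is finite. -/
def StructLocallyFinite (L : FirstOrder.Language) (M : Type*) [L.Structure M] : Prop :=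
  ∀ S : L.Substructure M, S.FG → (S : Set M).Finite

/-- `M → (B)^A_{r,d}` for substructures. -/
def ArrowSub (L : FirstOrder.Language) (M : Type*) [L.Structure M]
    (A B : L.Substructure M) (r d : ℕ) : Prop :=
  ∀ c : L.Substructure M → Fin r, ∃ B' : L.Substructure M,
    Nonempty (B' ≃[L] B) ∧
      (c '' {A' : L.Substructure M | A' ≤ B' ∧ Nonempty (A' ≃[L] A)}).ncard ≤ d

/-- `M →ᵉ (B)^A_{r,d}` for embeddings. -/
def ArrowEmb (L : FirstOrder.Language) (M : Type*) [L.Structure M]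
    (A B : L.Substructure M) (r d : ℕ) : Prop :=
  ∀ c : (A ↪[L] M) → Fin r, ∃ h : B ↪[L] M,
    (c '' {j : A ↪[L] M | ∃ e : A ↪[L] B, j = h.comp e}).ncard ≤ d

/-- A structure is rigid if its only automorphism is the identity. -/
def IsRigidStructure (L : FirstOrder.Language) (M : Type*) [L.Structure M] : Prop :=
  ∀ σ : M ≃[L] M, ∀ x : M, σ x = x


/-- The language with one unary function symbol (successor). -/
inductive SuccFunc : ℕ → Type
  | s : SuccFunc 1

def Lsucc : FirstOrder.Language :=
  ⟨SuccFunc, fun _ => Empty⟩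

/-- The structure `𝒜 = (ℤ; s)` with `s(z) = z + 1`. -/
instance zsuccStructure : Lsucc.Structure ℤ where
  funMap {n} f x := match f with | .s => x 0 + 1
  RelMap {n} r _ := r.elim

/-- The language with two unary function symbols (successor and predecessor). -/
inductive SPFunc : ℕ → Type
  | s : SPFunc 1
  | p : SPFunc 1

def Lsp : FirstOrder.Language :=
  ⟨SPFunc, fun _ => Empty⟩

/-- The structure `ℬ = (ℤ; s, p)` with `s(z) = z + 1` and `p(z) = z - 1`. -/
instance zspStructure : Lsp.Structure ℤ where
  funMap {n} f x := match f with | .s => x 0 + 1 | .p => x 0 - 1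
  RelMap {n} r _ := r.elim

section QfType

variable {L L' : Language} {M : Type*}

theorem FirstOrder.Language.BoundedFormula.IsQF.onBoundedFormula {α : Type*} {n : ℕ}
    (ϕ : L →ᴸ L') {φ : L.BoundedFormula α n} (hφ : φ.IsQF) :
    (ϕ.onBoundedFormula φ).IsQF := by
  induction hφ with
  | falsum => exact .falsum
  | of_isAtomic h =>
    cases h with
    | equal => exact (BoundedFormula.IsAtomic.equal _ _).isQF
    | rel => exact (BoundedFormula.IsAtomic.rel _ _).isQF
  | imp _ _ ih₁ ih₂ => exact ih₁.imp ih₂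

theorem SameQfType.of_lhom [L.Structure M] [L'.Structure M] (ϕ : L →ᴸ L') [ϕ.IsExpansionOn M]
    {n : ℕ} {x y : Fin n → M} (h : SameQfType L' M x y) : SameQfType L M x y := by
  intro φ hφ
  rw [← ϕ.realize_onFormula, ← ϕ.realize_onFormula]
  exact h _ (hφ.onBoundedFormula ϕ)

theorem sameQfType_comp_embedding [L.Structure M] (σ : M ↪[L] M) {n : ℕ} (x : Fin n → M) :
    SameQfType L M x (σ ∘ x) := by
  intro φ hφ
  have hxs : (σ ∘ default : Fin 0 → M) = default := Subsingleton.elim _ _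
  have := (hφ.realize_embedding σ (v := x) (xs := default)).symm
  rwa [hxs] at this

end QfType

section Translation

def Lsucc.toLsp : Lsucc →ᴸ Lsp where
  onFunction {_} f := match f with | .s => .s
  onRelation {_} r := r.elim

instance : Lsucc.toLsp.IsExpansionOn ℤ where
  map_onFunction {_} f _ := by cases f; rfl
  map_onRelation {_} r := r.elim

def Lsp.addConstEquiv (c : ℤ) : ℤ ≃[Lsp] ℤ where
  toEquiv := Equiv.addRight c
  map_fun' {_} f x := by
    cases f
    · exact add_right_comm (x 0) 1 c
    · exact sub_add_eq_add_sub (x 0) 1 c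
  map_rel' {_} r := r.elim

def Lsucc.iterSucc {α : Type*} (k : ℕ) (t : Lsucc.Term α) : Lsucc.Term α :=
  (Functions.apply₁ (SuccFunc.s : Lsucc.Functions 1))^[k] t

@[simp]
theorem Lsucc.realize_iterSucc {α : Type*} (k : ℕ) (t : Lsucc.Term α) (v : α → ℤ) :
    (iterSucc k t).realize v = t.realize v + k := by
  induction k with
  | zero => simp [iterSucc]
  | succ k ih =>
    rw [iterSucc, Function.iterate_succ_apply', ← iterSucc]
    show (iterSucc k t).realize v + 1 = _
    rw [ih]
    push_cast
    ring

theorem Lsucc.sub_eq_sub_of_sameQfType {n : ℕ} {x y : Fin n → ℤ} (h : SameQfType Lsucc ℤ x y)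
    (i j : Fin n) : x i - x j = y i - y j := by
  set d := x i - x j
  have hxy := h (Term.equal (Lsucc.iterSucc (-d).toNat (var i)) (Lsucc.iterSucc d.toNat (var j)))
    (BoundedFormula.IsAtomic.equal _ _).isQF
  simp only [Formula.realize_equal, Lsucc.realize_iterSucc, Term.realize_var] at hxy
  omega

theorem exists_eq_add_const_of_sub_eq_sub {n : ℕ} {x y : Fin n → ℤ}
    (h : ∀ i j, x i - x j = y i - y j) : ∃ c : ℤ, y = fun i => x i + c := by
  rcases isEmpty_or_nonempty (Fin n) with _ | ⟨⟨i₀⟩⟩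
  · exact ⟨0, Subsingleton.elim _ _⟩
  · exact ⟨y i₀ - x i₀, funext fun i => by have := h i i₀; omega⟩

theorem SameQfType.toLsp {n : ℕ} {x y : Fin n → ℤ} (h : SameQfType Lsucc ℤ x y) :
    SameQfType Lsp ℤ x y := by
  obtain ⟨c, rfl⟩ := exists_eq_add_const_of_sub_eq_sub (Lsucc.sub_eq_sub_of_sameQfType h)
  exact sameQfType_comp_embedding (Lsp.addConstEquiv c).toEmbedding x

theorem isSemiRetraction_id_id : IsSemiRetraction Lsucc Lsp ℤ ℤ id id :=
  ⟨⟨Function.injective_id, fun _ _ _ h => h.toLsp⟩,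
    ⟨Function.injective_id, fun _ _ _ h => h.of_lhom Lsucc.toLsp⟩,
    fun _ _ _ _ => Iff.rfl⟩

end Translation

section Ramsey

namespace Lsucc

def iciSubstructure (a : ℤ) : Lsucc.Substructure ℤ where
  carrier := Set.Ici a
  fun_mem {_} f x hx := by
    cases f
    exact Int.le_add_one (hx 0)

@[simp]
theorem mem_iciSubstructure {a z : ℤ} : z ∈ iciSubstructure a ↔ a ≤ z := Iff.rfl

@[simp]
theorem coe_iciSubstructure (a : ℤ) : (iciSubstructure a : Set ℤ) = Set.Ici a := rfl

theorem iciSubstructure_le_of_mem {S : Lsucc.Substructure ℤ} {b : ℤ} (hb : b ∈ S) :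
    iciSubstructure b ≤ S := by
  intro z hz
  induction z, hz using Int.leInduction with
  | base => exact hb
  | succ z _ ih => exact S.fun_mem SuccFunc.s (fun _ => z) (fun _ => ih)

theorem closure_singleton (a : ℤ) : Substructure.closure Lsucc {a} = iciSubstructure a :=
  le_antisymm
    (Substructure.closure_le.2 (Set.singleton_subset_iff.2 (mem_iciSubstructure.2 le_rfl)))
    (iciSubstructure_le_of_mem (Substructure.subset_closure rfl))

def iciSubstructureEquiv (a b : ℤ) : iciSubstructure a ≃[Lsucc] iciSubstructure b where
  toFun z := ⟨z - a + b, show b ≤ _ by have : a ≤ (z : ℤ) := z.2; omega⟩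
  invFun z := ⟨z - b + a, show a ≤ _ by have : b ≤ (z : ℤ) := z.2; omega⟩
  left_inv z := by simp
  right_inv z := by simp
  map_fun' {_} f x := by
    cases f
    exact Subtype.ext (show (x 0 : ℤ) + 1 - a + b = x 0 - a + b + 1 by ring)
  map_rel' {_} r := r.elim

noncomputable def parityColoring (S : Lsucc.Substructure ℤ) : Fin 2 :=
  if Even (sInf (S : Set ℤ)) then 0 else 1

theorem parityColoring_iciSubstructure (a : ℤ) :
    parityColoring (iciSubstructure a) = if Even a then 0 else 1 := by
  simp [parityColoring, csInf_Ici]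

theorem parityColoring_iciSubstructure_add_one_ne (a : ℤ) :
    parityColoring (iciSubstructure (a + 1)) ≠ parityColoring (iciSubstructure a) := by
  simp only [parityColoring_iciSubstructure, Int.even_add_one]
  split_ifs <;> simp_all

theorem not_arrowSub_iciSubstructure (a : ℤ) :
    ¬ ArrowSub Lsucc ℤ (iciSubstructure a) (iciSubstructure a) 2 1 := by
  intro hArrow
  obtain ⟨B', ⟨e⟩, hcard⟩ := hArrow parityColoring
  obtain ⟨b, hb⟩ := e.symm ⟨a, mem_iciSubstructure.2 le_rfl⟩
  have hcopy : ∀ c, b ≤ c → iciSubstructure c ∈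
      {A' : Lsucc.Substructure ℤ | A' ≤ B' ∧ Nonempty (A' ≃[Lsucc] iciSubstructure a)} :=
    fun c hbc => ⟨(iciSubstructure_le_of_mem hb).trans' (Set.Ici_subset_Ici.2 hbc),
      ⟨iciSubstructureEquiv c a⟩⟩
  exact parityColoring_iciSubstructure_add_one_ne b <|
    (Set.ncard_le_one (Set.toFinite _)).1 hcard
      _ ⟨_, hcopy (b + 1) (Int.le_add_one le_rfl), rfl⟩ _ ⟨_, hcopy b le_rfl, rfl⟩

end Lsucc

end Ramsey

/-- Example 5.6 / `notlocfin`: (i) the identity maps form a semi-retraction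
between `𝒜 = (ℤ; s)` and `ℬ = (ℤ; s, p)`; and (ii) `𝒜` fails the Ramsey property: with
`A = B = ⟨0⟩_𝒜` (whose underlying set is the set of nonnegative integers), there is a
2-coloring of the copies of `A` in `𝒜` on which no copy of `B` is homogeneous, i.e. `(A, B)` is
not a Ramsey duo for `𝒜`.  Hence local finiteness cannot be dropped from the semi-retraction
transfer theorems. -/
theorem identity_semiRetraction_int_succ_and_RP_failure :
    IsSemiRetraction Lsucc Lsp ℤ ℤ id id ∧
    ((Substructure.closure Lsucc {(0 : ℤ)} : Lsucc.Substructure ℤ) : Set ℤ)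
        = Set.Ici (0 : ℤ) ∧
    ¬ ArrowSub Lsucc ℤ (Substructure.closure Lsucc {(0 : ℤ)})
        (Substructure.closure Lsucc {(0 : ℤ)}) 2 1 := by
  rw [Lsucc.closure_singleton]
  exact ⟨isSemiRetraction_id_id, Lsucc.coe_iciSubstructure 0,
    Lsucc.not_arrowSub_iciSubstructure 0⟩
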